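/- arXiv:1806.00032 — 4 statements merged into one kernel-verified Lean document; each statement's English description precedes it below -/
import Mathlib

section
/- For all real numbers a₁, a₂, b₁, b₂, all natural numbers n₁, n₂, and every real number x, the connection formula holds: C_{n₁,n₂}^{(b₁,b₂)}(x) = Σ_{k=0}^{n₁} Σ_{ℓ=0}^{n₂} C(n₁,k) C(n₂,ℓ) (a₁-b₁)^k (a₂-b₂)^ℓ C_{n₁-k,n₂-ℓ}^{(a₁,a₂)}(x). -/
/-- The falling factorial `x⁽ⁿ⁾ = x(x-1)⋯(x-n+1)`. -/
noncomputable def fallingFactorial (x : ℝ) (n : ℕ) : ℝ :=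
  ∏ j ∈ Finset.range n, (x - j)

/-- The multiple Charlier polynomial `C_{n₁,n₂}^{(a₁,a₂)}(x)`. -/
noncomputable def charlier (a₁ a₂ : ℝ) (n₁ n₂ : ℕ) (x : ℝ) : ℝ :=
  ∑ k ∈ Finset.range (n₁ + 1), ∑ l ∈ Finset.range (n₂ + 1),
    (n₁.choose k : ℝ) * (n₂.choose l : ℝ) * (-a₁) ^ (n₁ - k) * (-a₂) ^ (n₂ - l) *
      fallingFactorial x (k + l)

/-!
Both sides are values of one linear functional `L` on `ℝ[X₀, X₁]`, the one sending
`X₀ ^ k * X₁ ^ l` to `x⁽ᵏ⁺ˡ⁾`: by the binomial theorem `C^{(a₁,a₂)}_{n₁,n₂}(x)` is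
`L ((X₀ - a₁) ^ n₁ * (X₁ - a₂) ^ n₂)`. Writing `Xᵢ - bᵢ = (aᵢ - bᵢ) + (Xᵢ - aᵢ)`, expanding once
more by the binomial theorem and applying `L` termwise gives the connection formula.
-/

open MvPolynomial Finset

section

variable {R : Type*} [CommRing R]

noncomputable def umbralFunctional (φ : ℕ → ℕ → R) : MvPolynomial (Fin 2) R →ₗ[R] R :=
  (basisMonomials (Fin 2) R).constr R fun s => φ (s 0) (s 1)

theorem umbralFunctional_X_pow_mul_X_pow (φ : ℕ → ℕ → R) (k l : ℕ) :
    umbralFunctional φ (X 0 ^ k * X 1 ^ l) = φ k l := by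
  have h : (X 0 ^ k * X 1 ^ l : MvPolynomial (Fin 2) R) = basisMonomials (Fin 2) R
      (Finsupp.single 0 k + Finsupp.single 1 l) := by
    rw [coe_basisMonomials, X_pow_eq_monomial, X_pow_eq_monomial, monomial_mul, one_mul]
  rw [h, umbralFunctional, Module.Basis.constr_basis]
  simp

theorem umbralFunctional_C_mul (φ : ℕ → ℕ → R) (c : R) (p : MvPolynomial (Fin 2) R) :
    umbralFunctional φ (C c * p) = c * umbralFunctional φ p := by
  rw [C_mul', map_smul, smul_eq_mul]

def binomialTransform₂ (a₁ a₂ : R) (φ : ℕ → ℕ → R) (n₁ n₂ : ℕ) : R :=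
  ∑ k ∈ range (n₁ + 1), ∑ l ∈ range (n₂ + 1),
    (n₁.choose k : R) * (n₂.choose l : R) * (-a₁) ^ (n₁ - k) * (-a₂) ^ (n₂ - l) * φ k l

theorem umbralFunctional_sub_C_pow_mul_sub_C_pow (φ : ℕ → ℕ → R) (a₁ a₂ : R) (n₁ n₂ : ℕ) :
    umbralFunctional φ ((X 0 - C a₁) ^ n₁ * (X 1 - C a₂) ^ n₂) =
      binomialTransform₂ a₁ a₂ φ n₁ n₂ := by
  simp only [sub_eq_add_neg, ← map_neg, add_pow, sum_mul_sum, map_sum]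
  refine sum_congr rfl fun k _ => sum_congr rfl fun l _ => ?_
  rw [← umbralFunctional_X_pow_mul_X_pow φ k l, ← umbralFunctional_C_mul]
  congr 1
  simp only [map_mul, map_pow, map_natCast]
  ring

theorem binomialTransform₂_connection (φ : ℕ → ℕ → R) (a₁ a₂ b₁ b₂ : R) (n₁ n₂ : ℕ) :
    binomialTransform₂ b₁ b₂ φ n₁ n₂ =
      ∑ k ∈ range (n₁ + 1), ∑ l ∈ range (n₂ + 1),
        (n₁.choose k : R) * (n₂.choose l : R) * (a₁ - b₁) ^ k * (a₂ - b₂) ^ l *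
          binomialTransform₂ a₁ a₂ φ (n₁ - k) (n₂ - l) := by
  have shift (i : Fin 2) (a b : R) : X i - C b = C (a - b) + (X i - C a) := by
    rw [map_sub]; ring
  rw [← umbralFunctional_sub_C_pow_mul_sub_C_pow, shift 0 a₁, shift 1 a₂, add_pow, add_pow,
    sum_mul_sum, map_sum]
  refine sum_congr rfl fun k _ => ?_
  rw [map_sum]
  refine sum_congr rfl fun l _ => ?_
  rw [← umbralFunctional_sub_C_pow_mul_sub_C_pow, ← umbralFunctional_C_mul]
  congr 1
  simp only [map_mul, map_pow, map_natCast]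
  ring

end

/-- Connection formula between multiple Charlier polynomials with different parameters. -/
theorem charlier_connection (a₁ a₂ b₁ b₂ : ℝ) (n₁ n₂ : ℕ) (x : ℝ) :
    charlier b₁ b₂ n₁ n₂ x =
      ∑ k ∈ Finset.range (n₁ + 1), ∑ l ∈ Finset.range (n₂ + 1),
        (n₁.choose k : ℝ) * (n₂.choose l : ℝ) * (a₁ - b₁) ^ k * (a₂ - b₂) ^ l *
          charlier a₁ a₂ (n₁ - k) (n₂ - l) x :=
  binomialTransform₂_connection (fun k l => fallingFactorial x (k + l)) a₁ a₂ b₁ b₂ n₁ n₂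
end

section
/- Let r ≥ 1, let a : Fin r → ℝ, and let x be a natural number. For every t : Fin r → ℝ, the family (n ↦ C_n^{(a)}(x) · ∏_{i=1}^{r} t_i^{n_i}/n_i!) indexed by multi-indices n ∈ ℕ^r is summable and its sum equals exp(-Σ_{i=1}^{r} a_i t_i) · (1 + Σ_{i=1}^{r} t_i)^x. -/
/-- The multiple Charlier polynomial `C_n^{(a)}(x)` for a multi-index `n : Fin r → ℕ`
and parameters `a : Fin r → ℝ`. -/
noncomputable def mcharlier {r : ℕ} (a : Fin r → ℝ) (n : Fin r → ℕ) (x : ℝ) : ℝ :=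
  ∑ k ∈ Fintype.piFinset (fun i => Finset.range (n i + 1)),
    (∏ i, ((n i).choose (k i) : ℝ) * (-a i) ^ (n i - k i)) * fallingFactorial x (∑ i, k i)

/-!
Both factors on the right are absolutely convergent series over multi-indices:
`exp (-∑ aᵢtᵢ) = ∑ₘ ∏ (-aᵢtᵢ)^{mᵢ}/mᵢ!`, and by the binomial and multinomial theorems
`(1 + ∑ tᵢ)^x = ∑ₖ x^{(|k|)} ∏ tᵢ^{kᵢ}/kᵢ!`, a finite sum because `x^{(|k|)} = 0` once `|k| > x`.
In their Cauchy product over `ℕ^r` the coefficient of `n` is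
`∑_{k ≤ n} ∏ C(nᵢ,kᵢ) (-aᵢ)^{nᵢ-kᵢ} x^{(|k|)} · ∏ tᵢ^{nᵢ}/nᵢ! = C_n^{(a)}(x) ∏ tᵢ^{nᵢ}/nᵢ!`.
-/

open Finset

theorem fallingFactorial_natCast (x n : ℕ) : fallingFactorial x n = x.descFactorial n := by
  rw [fallingFactorial, ← descPochhammer_eval_eq_prod_range, descPochhammer_eval_eq_descFactorial]

theorem fallingFactorial_natCast_eq_zero {x n : ℕ} (h : x < n) : fallingFactorial x n = 0 := by
  rw [fallingFactorial_natCast, Nat.descFactorial_eq_zero_iff_lt.2 h, Nat.cast_zero]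

theorem pow_div_factorial_mul_pow_div_factorial {K : Type*} [Field K] [CharZero K] (c t : K)
    {n k : ℕ} (h : k ≤ n) :
    (c * t) ^ (n - k) / (n - k).factorial * (t ^ k / k.factorial) =
      n.choose k * c ^ (n - k) * (t ^ n / n.factorial) := by
  obtain ⟨m, rfl⟩ := Nat.exists_eq_add_of_le' h
  have : ((m + k).factorial : K) ≠ 0 := by exact_mod_cast (m + k).factorial_ne_zero
  rw [Nat.cast_choose K h, Nat.add_sub_cancel, mul_pow, pow_add]
  field_simp

theorem sum_piAntidiag_prod_pow_div_factorial {ι K : Type*} [Fintype ι] [DecidableEq ι]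
    [Field K] [CharZero K] (t : ι → K) (s : ℕ) :
    ∑ k ∈ piAntidiag univ s, ∏ i, t i ^ k i / (k i).factorial = (∑ i, t i) ^ s / s.factorial := by
  rw [sum_pow_eq_sum_piAntidiag, sum_div]
  refine sum_congr rfl fun k hk => ?_
  have hspec : (∏ i, ((k i).factorial : K)) * Nat.multinomial univ k = s.factorial := by
    rw [← (mem_piAntidiag.1 hk).1]; exact_mod_cast Nat.multinomial_spec univ k
  have : (Nat.multinomial univ k : K) ≠ 0 := Nat.cast_ne_zero.2 (Nat.multinomial_pos _ _).ne'
  rw [← hspec, prod_div_distrib]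
  field_simp

theorem summable_norm_and_hasSum_fin_prod {R β : Type*} [NormedCommRing R] [CompleteSpace R]
    {r : ℕ} (f : Fin r → β → R) (hf : ∀ i, Summable fun b => ‖f i b‖) :
    Summable (fun n : Fin r → β => ‖∏ i, f i (n i)‖) ∧
      HasSum (fun n : Fin r → β => ∏ i, f i (n i)) (∏ i, ∑' b, f i b) := by
  induction r with
  | zero =>
    simp only [univ_eq_empty, prod_empty]
    exact ⟨(hasSum_unique _).summable, hasSum_unique _⟩
  | succ r ih =>
    obtain ⟨ih_norm, ih⟩ := ih (fun i => f i.succ) fun i => hf i.succ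
    have hsplit : ∀ p : β × (Fin r → β),
        ∏ i, f i (Fin.consEquiv (fun _ => β) p i) = f 0 p.1 * ∏ i, f i.succ (p.2 i) := fun p => by
      rw [Fin.prod_univ_succ]; rfl
    rw [← (Fin.consEquiv fun _ => β).summable_iff, ← (Fin.consEquiv fun _ => β).hasSum_iff,
      Fin.prod_univ_succ]
    simp only [Function.comp_def, hsplit]
    set g := fun n : Fin r → β => ∏ i, f i.succ (n i)
    exact ⟨(hf 0).mul_norm (g := g) ih_norm,
      (hf 0).of_norm.hasSum.mul (g := g) ih (summable_mul_of_summable_norm (hf 0) ih_norm)⟩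

theorem summable_norm_and_hasSum_prod_pow_div_factorial {r : ℕ} (c : Fin r → ℝ) :
    Summable (fun m : Fin r → ℕ => ‖∏ i, c i ^ m i / (m i).factorial‖) ∧
    HasSum (fun m : Fin r → ℕ => ∏ i, c i ^ m i / (m i).factorial) (Real.exp (∑ i, c i)) := by
  have hexp (y : ℝ) : ∑' m : ℕ, y ^ m / m.factorial = Real.exp y := by
    rw [Real.exp_eq_exp_ℝ, NormedSpace.exp_eq_tsum_div]
  have hnorm (y : ℝ) : Summable fun m : ℕ => ‖y ^ m / m.factorial‖ := by
    simpa only [norm_div, norm_pow, Real.norm_eq_abs, Nat.abs_cast]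
      using Real.summable_pow_div_factorial |y|
  obtain ⟨hsummable, hsum⟩ :=
    summable_norm_and_hasSum_fin_prod (fun i (m : ℕ) => c i ^ m / m.factorial) fun i => hnorm (c i)
  refine ⟨hsummable, ?_⟩
  rw [Real.exp_sum]
  simpa only [hexp] using hsum

theorem hasSum_sum_piFinset_mul_of_summable_norm {ι : Type*} [Fintype ι] [DecidableEq ι]
    {u v : (ι → ℕ) → ℝ} (hu : Summable fun m => ‖u m‖) (hv : Summable fun k => ‖v k‖) :
    HasSum (fun n => ∑ k ∈ Fintype.piFinset fun i => range (n i + 1), u (n - k) * v k)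
      ((∑' m, u m) * ∑' k, v k) := by
  classical
  set G : (ι → ℕ) × (ι → ℕ) → ℝ := fun p => if p.2 ≤ p.1 then u (p.1 - p.2) * v p.2 else 0
  have hshift : Function.Injective fun p : (ι → ℕ) × (ι → ℕ) => (p.1 + p.2, p.2) :=
    fun p q h => by
      simp only [Prod.mk.injEq] at h
      exact Prod.ext (add_right_cancel (h.2 ▸ h.1)) h.2
  have hG : HasSum G ((∑' m, u m) * ∑' k, v k) := by
    rw [← hshift.hasSum_iff]
    · simpa [G, Function.comp_def] using
        hu.of_norm.hasSum.mul hv.of_norm.hasSum (summable_mul_of_summable_norm hu hv)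
    · intro p hp
      by_contra hle
      simp only [G, ite_eq_right_iff, Classical.not_imp] at hle
      exact hp ⟨(p.1 - p.2, p.2), Prod.ext (tsub_add_cancel_of_le hle.1) rfl⟩
  refine hG.prod_fiberwise fun n => ?_
  have hmem : ∀ k, k ∈ Fintype.piFinset (fun i => range (n i + 1)) ↔ k ≤ n := fun k => by
    simp [Pi.le_def]
  have hfin := hasSum_sum_of_ne_finset_zero (s := Fintype.piFinset fun i => range (n i + 1))
    (f := fun k => G (n, k)) (L := .unconditional _) fun k hk => if_neg ((hmem k).not.1 hk)
  rwa [sum_congr rfl fun k hk => if_pos ((hmem k).1 hk)] at hfin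

theorem summable_norm_and_hasSum_fallingFactorial_mul_prod {ι : Type*} [Fintype ι]
    (x : ℕ) (t : ι → ℝ) :
    Summable (fun k : ι → ℕ =>
      ‖fallingFactorial x (∑ i, k i) * ∏ i, t i ^ k i / (k i).factorial‖) ∧
    HasSum (fun k : ι → ℕ => fallingFactorial x (∑ i, k i) * ∏ i, t i ^ k i / (k i).factorial)
      ((1 + ∑ i, t i) ^ x) := by
  classical
  set S := (range (x + 1)).biUnion (piAntidiag (univ : Finset ι))
  have hvanish : ∀ k ∉ S, fallingFactorial x (∑ i, k i) * ∏ i, t i ^ k i / (k i).factorial = 0 :=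
    fun k hk => by
      have : x < ∑ i, k i := by simpa [S, Nat.lt_succ_iff] using hk
      rw [fallingFactorial_natCast_eq_zero this, zero_mul]
  refine ⟨summable_of_ne_finset_zero (s := S) fun k hk => by rw [hvanish k hk, norm_zero], ?_⟩
  suffices h : (1 + ∑ i, t i) ^ x =
      ∑ k ∈ S, fallingFactorial x (∑ i, k i) * ∏ i, t i ^ k i / (k i).factorial by
    rw [h]; exact hasSum_sum_of_ne_finset_zero hvanish
  have hdisj : (range (x + 1) : Set ℕ).PairwiseDisjoint (piAntidiag (univ : Finset ι)) :=
    fun s _ s' _ hss' => disjoint_left.2 fun k hk hk' =>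
      hss' ((mem_piAntidiag.1 hk).1.symm.trans (mem_piAntidiag.1 hk').1)
  calc (1 + ∑ i, t i) ^ x
      = ∑ s ∈ range (x + 1), x.descFactorial s * ((∑ i, t i) ^ s / s.factorial) := by
        rw [add_comm, add_pow]
        refine sum_congr rfl fun s _ => ?_
        rw [Nat.descFactorial_eq_factorial_mul_choose]
        field_simp
        push_cast
        ring
    _ = _ := by
        rw [sum_biUnion hdisj]
        refine sum_congr rfl fun s _ => ?_
        rw [← sum_piAntidiag_prod_pow_div_factorial, mul_sum]
        refine sum_congr rfl fun k hk => ?_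
        rw [(mem_piAntidiag.1 hk).1, fallingFactorial_natCast]

theorem sum_piFinset_mul_eq_mcharlier_mul {r : ℕ} (a t : Fin r → ℝ) (x : ℝ) (n : Fin r → ℕ) :
    ∑ k ∈ Fintype.piFinset (fun i => range (n i + 1)),
        (∏ i, (-a i * t i) ^ (n - k) i / ((n - k) i).factorial) *
          (fallingFactorial x (∑ i, k i) * ∏ i, t i ^ k i / (k i).factorial) =
      mcharlier a n x * ∏ i, t i ^ n i / (n i).factorial := by
  rw [mcharlier, sum_mul]
  refine sum_congr rfl fun k hk => ?_
  have hkn (i : Fin r) : k i ≤ n i := Nat.lt_succ_iff.1 (mem_range.1 (Fintype.mem_piFinset.1 hk i))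
  calc _ = (∏ i, (-a i * t i) ^ (n i - k i) / (n i - k i).factorial * (t i ^ k i / (k i).factorial))
          * fallingFactorial x (∑ i, k i) := by
        rw [prod_mul_distrib]; simp only [Pi.sub_apply]; ring
    _ = (∏ i, (n i).choose (k i) * (-a i) ^ (n i - k i) * (t i ^ n i / (n i).factorial))
          * fallingFactorial x (∑ i, k i) := by
        rw [prod_congr rfl fun i _ => pow_div_factorial_mul_pow_div_factorial _ _ (hkn i)]
    _ = _ := by rw [prod_mul_distrib]; ring

theorem mcharlier_generatingFunction_general (r : ℕ) (a : Fin r → ℝ) (x : ℕ)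
    (t : Fin r → ℝ) :
    Summable (fun n : Fin r → ℕ =>
      mcharlier a n (x : ℝ) * ∏ i, t i ^ n i / ((n i).factorial : ℝ)) ∧
    ∑' n : Fin r → ℕ, mcharlier a n (x : ℝ) * ∏ i, t i ^ n i / ((n i).factorial : ℝ) =
      Real.exp (-∑ i, a i * t i) * (1 + ∑ i, t i) ^ x := by
  obtain ⟨hu_norm, hu⟩ := summable_norm_and_hasSum_prod_pow_div_factorial fun i => -a i * t i
  obtain ⟨hv_norm, hv⟩ := summable_norm_and_hasSum_fallingFactorial_mul_prod x t
  have h := hasSum_sum_piFinset_mul_of_summable_norm hu_norm hv_norm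
  rw [hu.tsum_eq, hv.tsum_eq, funext (sum_piFinset_mul_eq_mcharlier_mul a t x)] at h
  simp only [neg_mul, sum_neg_distrib] at h
  exact ⟨h.summable, h.tsum_eq⟩

/-- Generating function for the multiple Charlier polynomials:
`e^{-∑ aᵢtᵢ} (1+∑ tᵢ)^x = ∑_n C_n^{(a)}(x) ∏ tᵢ^{nᵢ}/nᵢ!`. -/
theorem mcharlier_generatingFunction (r : ℕ) (hr : 1 ≤ r) (a : Fin r → ℝ) (x : ℕ)
    (t : Fin r → ℝ) :
    Summable (fun n : Fin r → ℕ =>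
      mcharlier a n (x : ℝ) * ∏ i, t i ^ n i / ((n i).factorial : ℝ)) ∧
    ∑' n : Fin r → ℕ, mcharlier a n (x : ℝ) * ∏ i, t i ^ n i / ((n i).factorial : ℝ) =
      Real.exp (-∑ i, a i * t i) * (1 + ∑ i, t i) ^ x :=
  mcharlier_generatingFunction_general r a x t
end

section
/- Let r ≥ 1 and let a, α : Fin r → ℝ. For every multi-index n ∈ ℕ^r and all real numbers x, y, the addition formula holds: C_n^{(a)}(x+y) = Σ_{k₁=0}^{n₁} ⋯ Σ_{k_r=0}^{n_r} (∏_{i=1}^{r} C(n_i,k_i)) C_k^{(α)}(x) · C_{n-k}^{(a-α)}(y), where n-k and a-α denote componentwise differences. -/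
open Finset Polynomial TensorProduct Algebra.TensorProduct

theorem fallingFactorial_eq_smeval (x : ℝ) (m : ℕ) :
    fallingFactorial x m = (descPochhammer ℤ m).smeval x := by
  rw [fallingFactorial, ← descPochhammer_eval_eq_prod_range,
    ← descPochhammer_map (Int.castRingHom ℝ), eval_map, ← eval₂_smulOneHom_eq_smeval]
  congr 1
  exact Subsingleton.elim _ _

theorem fallingFactorial_add (x y : ℝ) (m : ℕ) :
    fallingFactorial (x + y) m = ∑ ij ∈ antidiagonal m,
      m.choose ij.1 * (fallingFactorial x ij.1 * fallingFactorial y ij.2) := by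
  simp only [fallingFactorial_eq_smeval]
  exact Ring.descPochhammer_smeval_add m (Commute.all x y)

theorem prod_add_pow_eq_sum_piFinset {ι R : Type*} [Fintype ι] [DecidableEq ι] [CommSemiring R]
    (A B : ι → R) (n : ι → ℕ) :
    ∏ i, (A i + B i) ^ n i = ∑ k ∈ Fintype.piFinset (fun i => range (n i + 1)),
      (∏ i, (n i).choose (k i)) • ((∏ i, A i ^ k i) * ∏ i, B i ^ (n i - k i)) := by
  simp_rw [add_pow, prod_univ_sum, prod_mul_distrib]
  refine sum_congr rfl fun k _ => ?_
  simp_rw [nsmul_eq_mul]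
  push_cast
  ring

noncomputable def umbralEval (x : ℝ) : ℝ[X] →ₗ[ℝ] ℝ :=
  lsum fun m => fallingFactorial x m • LinearMap.id

@[simp]
theorem umbralEval_monomial (x c : ℝ) (m : ℕ) :
    umbralEval x (monomial m c) = c * fallingFactorial x m := by
  simp [umbralEval, mul_comm]

@[simp]
theorem umbralEval_X_pow (x : ℝ) (m : ℕ) : umbralEval x (X ^ m) = fallingFactorial x m := by
  rw [X_pow_eq_monomial, umbralEval_monomial, one_mul]

theorem umbralEval_X_pow_mul_C (x c : ℝ) (m : ℕ) :
    umbralEval x (X ^ m * C c) = c * fallingFactorial x m := by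
  rw [X_pow_mul_C, C_mul_X_pow_eq_monomial, umbralEval_monomial]

theorem mcharlier_eq_umbralEval {r : ℕ} (a : Fin r → ℝ) (n : Fin r → ℕ) (x : ℝ) :
    mcharlier a n x = umbralEval x (∏ i, (X - C (a i)) ^ n i) := by
  simp_rw [sub_eq_add_neg, prod_add_pow_eq_sum_piFinset, prod_pow_eq_pow_sum, ← C_neg, ← C_pow,
    ← map_prod, map_sum, map_nsmul, umbralEval_X_pow_mul_C, mcharlier, nsmul_eq_mul,
    prod_mul_distrib]
  refine sum_congr rfl fun k _ => ?_
  push_cast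
  ring

section addCoproduct

variable (R : Type*)

noncomputable def addCoproduct [CommSemiring R] : R[X] →ₐ[R] R[X] ⊗[R] R[X] :=
  aeval (X ⊗ₜ[R] 1 + 1 ⊗ₜ[R] X)

theorem addCoproduct_X_pow [CommSemiring R] (m : ℕ) :
    addCoproduct R (X ^ m) =
      ∑ ij ∈ antidiagonal m, m.choose ij.1 • ((X ^ ij.1 : R[X]) ⊗ₜ[R] (X ^ ij.2 : R[X])) := by
  rw [addCoproduct, map_pow, aeval_X, (Commute.all _ _).add_pow']
  simp [tmul_pow]

theorem addCoproduct_X_sub_C [CommRing R] (a b : R) :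
    addCoproduct R (X - C (a + b)) =
      includeLeft (S := R) (X - C a) + includeRight (X - C b) := by
  simp only [← algebraMap_eq, map_sub, AlgHom.commutes, addCoproduct, aeval_X, map_add,
    includeLeft_apply, includeRight_apply]
  ring

end addCoproduct

noncomputable def umbralEval₂ (x y : ℝ) : ℝ[X] ⊗[ℝ] ℝ[X] →ₗ[ℝ] ℝ :=
  LinearMap.mul' ℝ ℝ ∘ₗ TensorProduct.map (umbralEval x) (umbralEval y)

@[simp]
theorem umbralEval₂_tmul (x y : ℝ) (p q : ℝ[X]) :
    umbralEval₂ x y (p ⊗ₜ q) = umbralEval x p * umbralEval y q := rfl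

theorem umbralEval_add (x y : ℝ) (p : ℝ[X]) :
    umbralEval (x + y) p = umbralEval₂ x y (addCoproduct ℝ p) := by
  suffices umbralEval (x + y) = umbralEval₂ x y ∘ₗ (addCoproduct ℝ).toLinearMap from
    LinearMap.congr_fun this p
  refine lhom_ext' fun m => LinearMap.ext_ring ?_
  simp only [LinearMap.comp_apply, monomial_one_right_eq_X_pow, AlgHom.toLinearMap_apply]
  rw [addCoproduct_X_pow, map_sum, umbralEval_X_pow, fallingFactorial_add]
  refine sum_congr rfl fun ij _ => ?_
  rw [map_nsmul, umbralEval₂_tmul, umbralEval_X_pow, umbralEval_X_pow, nsmul_eq_mul]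

theorem mcharlier_addition_general (r : ℕ) (a α : Fin r → ℝ) (n : Fin r → ℕ) (x y : ℝ) :
    mcharlier a n (x + y) =
      ∑ k ∈ Fintype.piFinset (fun i => Finset.range (n i + 1)),
        (∏ i, ((n i).choose (k i) : ℝ)) *
          mcharlier α k x * mcharlier (a - α) (fun i => n i - k i) y := by
  have hsplit : ∀ i, a i = α i + (a - α) i := fun i => by simp
  calc mcharlier a n (x + y)
      = umbralEval₂ x y (∏ i, (includeLeft (S := ℝ) (X - C (α i)) +
          includeRight (X - C ((a - α) i))) ^ n i) := by
        simp_rw [mcharlier_eq_umbralEval, umbralEval_add, map_prod, map_pow,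
          ← addCoproduct_X_sub_C, ← hsplit]
    _ = _ := by
        rw [prod_add_pow_eq_sum_piFinset, map_sum]
        refine sum_congr rfl fun k _ => ?_
        simp only [map_nsmul, ← map_pow (includeLeft (S := ℝ)), ← map_pow includeRight,
          ← map_prod (includeLeft (S := ℝ)), ← map_prod includeRight]
        simp only [includeLeft_apply, includeRight_apply, tmul_mul_tmul, one_mul, mul_one,
          umbralEval₂_tmul, mcharlier_eq_umbralEval, nsmul_eq_mul, Nat.cast_prod, mul_assoc]

/-- Addition formula for the multiple Charlier polynomials. -/
theorem mcharlier_addition (r : ℕ) (hr : 1 ≤ r) (a α : Fin r → ℝ) (n : Fin r → ℕ) (x y : ℝ) :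
    mcharlier a n (x + y) =
      ∑ k ∈ Fintype.piFinset (fun i => Finset.range (n i + 1)),
        (∏ i, ((n i).choose (k i) : ℝ)) *
          mcharlier α k x * mcharlier (a - α) (fun i => n i - k i) y :=
  mcharlier_addition_general r a α n x y
end

section
/- Let ω ≠ 0 be real and let {P_{n₁,n₂}}_{n₁,n₂≥0} be real polynomials with deg P_{n₁,n₂} = n₁ + n₂ for all n₁, n₂. Then {P_{n₁,n₂}} is a multiple Δ_ω-Appell polynomial set if and only if the addition formula P_{n₁,n₂}(x+y) = Σ_{k₁=0}^{n₁} Σ_{k₂=0}^{n₂} C(n₁,k₁) C(n₂,k₂) P_{n₁-k₁,n₂-k₂}(x) y^{(k₁+k₂,ω)} holds for all n₁, n₂ and all real x, y. -/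
open Polynomial

/-- The generalized falling factorial `x^{(n,ω)} = ∏_{j=0}^{n-1} (x - jω)`. -/
noncomputable def genFallingFactorial (ω x : ℝ) (n : ℕ) : ℝ :=
  ∏ j ∈ Finset.range n, (x - j * ω)

/-- The difference operator `Δ_ω` acting on real polynomials:
`(Δ_ω f)(x) = (f(x+ω) - f(x))/ω`. -/
noncomputable def deltaOmega (ω : ℝ) (p : Polynomial ℝ) : Polynomial ℝ :=
  Polynomial.C ω⁻¹ * (p.comp (Polynomial.X + Polynomial.C ω) - p)

/-- A doubly indexed family of real polynomials is a multiple `Δ_ω`-Appell polynomial set if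
`Δ_ω P_{n₁,n₂} = n₁ P_{n₁-1,n₂} + n₂ P_{n₁,n₂-1}`, where a term whose index would be
negative is omitted (its coefficient `nᵢ` is `0`). -/
def IsMultipleDeltaAppell (ω : ℝ) (P : ℕ → ℕ → Polynomial ℝ) : Prop :=
  ∀ n₁ n₂ : ℕ, deltaOmega ω (P n₁ n₂) =
    Polynomial.C (n₁ : ℝ) * P (n₁ - 1) n₂ + Polynomial.C (n₂ : ℝ) * P n₁ (n₂ - 1)

/-!
Fix `x` and read both sides of the addition formula as polynomials in `y`. A multiple
`Δ_ω`-Appell set is determined by its values at `0`: if `Δ_ω p = Δ_ω q` and `p(0) = q(0)`, then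
`p - q` vanishes on `ℕω`, hence is zero. If `P` is `Δ_ω`-Appell, so is `y ↦ P_{n₁,n₂}(x + y)`;
and for any array `a`, the expansion `∑ C(n₁,k₁) C(n₂,k₂) a_{n₁-k₁,n₂-k₂} y^{(k₁+k₂,ω)}` is
`Δ_ω`-Appell, because `Δ_ω y^{(k,ω)} = k y^{(k-1,ω)}` and `k C(n,k) = n C(n-1,k-1)`. With
`a = P(x)` both families take the value `P_{n₁,n₂}(x)` at `y = 0`, so they coincide. Conversely,
at `y = ω` only the terms with `k₁ + k₂ ≤ 1` survive, and what is left is the Appell relation.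
-/

open Finset

section deltaOmega

variable {ω : ℝ}

lemma eval_deltaOmega (p : ℝ[X]) (y : ℝ) :
    (deltaOmega ω p).eval y = ω⁻¹ * (p.eval (y + ω) - p.eval y) := by
  simp [deltaOmega, eval_comp]

lemma eval_add_eq_add_mul_eval_deltaOmega (hω : ω ≠ 0) (p : ℝ[X]) (y : ℝ) :
    p.eval (y + ω) = p.eval y + ω * (deltaOmega ω p).eval y := by
  rw [eval_deltaOmega]
  field_simp
  ring

variable (ω) in
noncomputable def deltaOmegaLinear : ℝ[X] →ₗ[ℝ] ℝ[X] where
  toFun := deltaOmega ω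
  map_add' p q := by simp only [deltaOmega, add_comp]; ring
  map_smul' r p := by
    simp only [deltaOmega, smul_eq_C_mul, mul_comp, C_comp, RingHom.id_apply]
    ring

lemma deltaOmega_sum {ι : Type*} (s : Finset ι) (f : ι → ℝ[X]) :
    deltaOmega ω (∑ i ∈ s, f i) = ∑ i ∈ s, deltaOmega ω (f i) :=
  map_sum (deltaOmegaLinear ω) f s

lemma deltaOmega_smul (r : ℝ) (p : ℝ[X]) : deltaOmega ω (r • p) = r • deltaOmega ω p :=
  map_smul (deltaOmegaLinear ω) r p

lemma deltaOmega_nsmul (n : ℕ) (p : ℝ[X]) : deltaOmega ω (n • p) = n • deltaOmega ω p :=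
  map_nsmul (deltaOmegaLinear ω) n p

lemma deltaOmega_comp_C_add (p : ℝ[X]) (x : ℝ) :
    deltaOmega ω (p.comp (C x + X)) = (deltaOmega ω p).comp (C x + X) :=
  Polynomial.funext fun y => by simp [eval_deltaOmega, eval_comp, add_assoc]

lemma eq_of_deltaOmega_eq (hω : ω ≠ 0) {p q : ℝ[X]} (hΔ : deltaOmega ω p = deltaOmega ω q)
    (h0 : p.eval 0 = q.eval 0) : p = q := by
  have hnodes (n : ℕ) : p.eval (n * ω) = q.eval (n * ω) := by
    induction n with
    | zero => simpa using h0
    | succ n ih =>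
      rw [Nat.cast_succ, add_one_mul, eval_add_eq_add_mul_eval_deltaOmega hω,
        eval_add_eq_add_mul_eval_deltaOmega hω, ih, hΔ]
  refine eq_of_infinite_eval_eq p q ?_
  have hinj : Function.Injective fun n : ℕ => (n : ℝ) * ω :=
    (mul_left_injective₀ hω).comp Nat.cast_injective
  exact (Set.infinite_range_of_injective hinj).mono (Set.range_subset_iff.mpr hnodes)

end deltaOmega

namespace IsMultipleDeltaAppell

variable {ω : ℝ}

theorem eq_of_eval_zero_eq (hω : ω ≠ 0) {A B : ℕ → ℕ → ℝ[X]} (hA : IsMultipleDeltaAppell ω A)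
    (hB : IsMultipleDeltaAppell ω B) (h0 : ∀ n₁ n₂, (A n₁ n₂).eval 0 = (B n₁ n₂).eval 0)
    (n₁ n₂ : ℕ) : A n₁ n₂ = B n₁ n₂ := by
  refine eq_of_deltaOmega_eq hω ?_ (h0 n₁ n₂)
  have h₁ : C (n₁ : ℝ) * A (n₁ - 1) n₂ = C (n₁ : ℝ) * B (n₁ - 1) n₂ := by
    rcases Nat.eq_zero_or_pos n₁ with rfl | _
    · simp
    · rw [eq_of_eval_zero_eq hω hA hB h0 (n₁ - 1) n₂]
  have h₂ : C (n₂ : ℝ) * A n₁ (n₂ - 1) = C (n₂ : ℝ) * B n₁ (n₂ - 1) := by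
    rcases Nat.eq_zero_or_pos n₂ with rfl | _
    · simp
    · rw [eq_of_eval_zero_eq hω hA hB h0 n₁ (n₂ - 1)]
  rw [hA, hB, h₁, h₂]
termination_by n₁ + n₂

theorem comp_C_add {P : ℕ → ℕ → ℝ[X]} (hP : IsMultipleDeltaAppell ω P) (x : ℝ) :
    IsMultipleDeltaAppell ω fun n₁ n₂ => (P n₁ n₂).comp (C x + X) := by
  intro n₁ n₂
  simp only [deltaOmega_comp_C_add, hP n₁ n₂, add_comp, mul_comp, C_comp]

end IsMultipleDeltaAppell

section genFallingFactorial

variable {ω : ℝ}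

lemma genFallingFactorial_succ (y : ℝ) (k : ℕ) :
    genFallingFactorial ω y (k + 1) = genFallingFactorial ω y k * (y - k * ω) :=
  prod_range_succ _ _

lemma genFallingFactorial_add_self_succ (y : ℝ) (k : ℕ) :
    genFallingFactorial ω (y + ω) (k + 1) = (y + ω) * genFallingFactorial ω y k := by
  simp only [genFallingFactorial, prod_range_succ', Nat.cast_zero, zero_mul, sub_zero,
    Nat.cast_succ]
  rw [mul_comm]
  congr 1
  exact prod_congr rfl fun j _ => by ring

lemma genFallingFactorial_natCast_mul_eq_zero {j k : ℕ} (hjk : j < k) :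
    genFallingFactorial ω (j * ω) k = 0 :=
  prod_eq_zero (mem_range.mpr hjk) (sub_self _)

lemma genFallingFactorial_self_eq_zero {k : ℕ} (hk : 2 ≤ k) : genFallingFactorial ω ω k = 0 := by
  simpa using genFallingFactorial_natCast_mul_eq_zero (ω := ω) (j := 1) hk

variable (ω) in
noncomputable def genFallingFactorialPoly (k : ℕ) : ℝ[X] :=
  ∏ j ∈ range k, (X - C (j * ω))

lemma eval_genFallingFactorialPoly (y : ℝ) (k : ℕ) :
    (genFallingFactorialPoly ω k).eval y = genFallingFactorial ω y k := by
  simp [genFallingFactorialPoly, genFallingFactorial, eval_prod]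

lemma deltaOmega_genFallingFactorialPoly (hω : ω ≠ 0) (k : ℕ) :
    deltaOmega ω (genFallingFactorialPoly ω k) = k • genFallingFactorialPoly ω (k - 1) := by
  refine Polynomial.funext fun y => ?_
  rcases k with _ | k
  · simp [eval_deltaOmega, eval_genFallingFactorialPoly, genFallingFactorial]
  · rw [nsmul_eq_mul, eval_mul, eval_natCast, eval_deltaOmega, eval_genFallingFactorialPoly,
      eval_genFallingFactorialPoly, genFallingFactorial_add_self_succ, genFallingFactorial_succ,
      Nat.add_sub_cancel, eval_genFallingFactorialPoly, Nat.cast_succ]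
    field_simp
    ring

end genFallingFactorial

lemma sum_range_choose_mul_nsmul {M : Type*} [AddCommMonoid M] (n : ℕ) (F : ℕ → ℕ → M) :
    ∑ k ∈ range (n + 2), ((n + 1).choose k * k) • F k (n + 1 - k) =
      (n + 1) • ∑ k ∈ range (n + 1), n.choose k • F (k + 1) (n - k) := by
  rw [sum_range_succ', smul_sum]
  simp only [mul_zero, zero_smul, add_zero, Nat.add_sub_add_right, smul_smul,
    Nat.add_one_mul_choose_eq]

lemma sum_range_choose_mul_eq_of_two_le {R : Type*} [CommSemiring R] (n : ℕ) (F : ℕ → R)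
    (hF : ∀ k, 2 ≤ k → F k = 0) :
    ∑ k ∈ range (n + 1), (n.choose k : R) * F k = F 0 + n * F 1 := by
  rcases n with _ | n
  · simp
  rw [sum_range_succ', sum_range_succ', sum_eq_zero fun k _ => by rw [hF (k + 1 + 1) (by omega),
    mul_zero]]
  simp [add_comm]

lemma sum_range_choose_mul_sum_range_choose_mul_eq_of_two_le {R : Type*} [CommSemiring R]
    (n₁ n₂ : ℕ) (F : ℕ → ℕ → R) (hF : ∀ k₁ k₂, 2 ≤ k₁ + k₂ → F k₁ k₂ = 0) :
    ∑ k₁ ∈ range (n₁ + 1), ∑ k₂ ∈ range (n₂ + 1), (n₁.choose k₁ : R) * n₂.choose k₂ * F k₁ k₂ =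
      F 0 0 + n₁ * F 1 0 + n₂ * F 0 1 := by
  have hinner (k₁ : ℕ) : ∑ k₂ ∈ range (n₂ + 1), (n₂.choose k₂ : R) * F k₁ k₂ =
      F k₁ 0 + n₂ * F k₁ 1 :=
    sum_range_choose_mul_eq_of_two_le n₂ _ fun k₂ hk => hF _ _ (by omega)
  simp_rw [mul_assoc, ← mul_sum, hinner]
  rw [sum_range_choose_mul_eq_of_two_le n₁ _ fun k₁ hk => by
    rw [hF _ _ (by omega), hF _ _ (by omega), mul_zero, add_zero], hF 1 1 le_rfl]
  ring

section appellExpansion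

variable {ω : ℝ}

variable (ω) in
noncomputable def appellExpansion (a : ℕ → ℕ → ℝ) (n₁ n₂ : ℕ) : ℝ[X] :=
  ∑ k₁ ∈ range (n₁ + 1), n₁.choose k₁ • ∑ k₂ ∈ range (n₂ + 1),
    n₂.choose k₂ • a (n₁ - k₁) (n₂ - k₂) • genFallingFactorialPoly ω (k₁ + k₂)

lemma eval_appellExpansion (a : ℕ → ℕ → ℝ) (n₁ n₂ : ℕ) (y : ℝ) :
    (appellExpansion ω a n₁ n₂).eval y =
      ∑ k₁ ∈ range (n₁ + 1), ∑ k₂ ∈ range (n₂ + 1),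
        (n₁.choose k₁ : ℝ) * n₂.choose k₂ * a (n₁ - k₁) (n₂ - k₂) *
          genFallingFactorial ω y (k₁ + k₂) := by
  simp only [appellExpansion, eval_finsetSum, eval_smul, smul_eq_mul, eval_genFallingFactorialPoly]
  simp only [nsmul_eq_mul, mul_sum, mul_assoc]

lemma eval_zero_appellExpansion (a : ℕ → ℕ → ℝ) (n₁ n₂ : ℕ) :
    (appellExpansion ω a n₁ n₂).eval 0 = a n₁ n₂ := by
  have hvanish {k : ℕ} (hk : 0 < k) : genFallingFactorial ω 0 k = 0 := by
    simpa using genFallingFactorial_natCast_mul_eq_zero (ω := ω) hk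
  rw [eval_appellExpansion, ← mul_one (a n₁ n₂)]
  convert sum_range_choose_mul_sum_range_choose_mul_eq_of_two_le n₁ n₂
    (fun k₁ k₂ => a (n₁ - k₁) (n₂ - k₂) * genFallingFactorial ω 0 (k₁ + k₂))
    (fun k₁ k₂ hk => by rw [hvanish (by omega), mul_zero]) using 1
  · simp only [mul_assoc]
  · simp [genFallingFactorial]

theorem isMultipleDeltaAppell_appellExpansion (hω : ω ≠ 0) (a : ℕ → ℕ → ℝ) :
    IsMultipleDeltaAppell ω (appellExpansion ω a) := by
  intro n₁ n₂
  set φ := genFallingFactorialPoly ω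
  have hsplit : deltaOmega ω (appellExpansion ω a n₁ n₂) =
      ∑ k₁ ∈ range (n₁ + 1), (n₁.choose k₁ * k₁) • ∑ k₂ ∈ range (n₂ + 1),
        n₂.choose k₂ • a (n₁ - k₁) (n₂ - k₂) • φ (k₁ + k₂ - 1) +
      ∑ k₁ ∈ range (n₁ + 1), n₁.choose k₁ • ∑ k₂ ∈ range (n₂ + 1),
        (n₂.choose k₂ * k₂) • a (n₁ - k₁) (n₂ - k₂) • φ (k₁ + k₂ - 1) := by
    simp only [appellExpansion, deltaOmega_sum, deltaOmega_nsmul, deltaOmega_smul,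
      deltaOmega_genFallingFactorialPoly hω, ← sum_add_distrib, smul_sum]
    refine sum_congr rfl fun k₁ _ => sum_congr rfl fun k₂ _ => ?_
    module
  have h₁ : ∑ k₁ ∈ range (n₁ + 1), (n₁.choose k₁ * k₁) • ∑ k₂ ∈ range (n₂ + 1),
      n₂.choose k₂ • a (n₁ - k₁) (n₂ - k₂) • φ (k₁ + k₂ - 1) =
        C (n₁ : ℝ) * appellExpansion ω a (n₁ - 1) n₂ := by
    rcases n₁ with _ | n₁
    · simp
    rw [sum_range_choose_mul_nsmul n₁ fun k r => ∑ k₂ ∈ range (n₂ + 1),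
      n₂.choose k₂ • a r (n₂ - k₂) • φ (k + k₂ - 1)]
    simp [appellExpansion, φ, nsmul_eq_mul]
  have h₂ : ∑ k₁ ∈ range (n₁ + 1), n₁.choose k₁ • ∑ k₂ ∈ range (n₂ + 1),
      (n₂.choose k₂ * k₂) • a (n₁ - k₁) (n₂ - k₂) • φ (k₁ + k₂ - 1) =
        C (n₂ : ℝ) * appellExpansion ω a n₁ (n₂ - 1) := by
    rcases n₂ with _ | n₂
    · simp
    have hinner (k₁ : ℕ) : ∑ k₂ ∈ range (n₂ + 2), ((n₂ + 1).choose k₂ * k₂) •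
        a (n₁ - k₁) (n₂ + 1 - k₂) • φ (k₁ + k₂ - 1) =
          (n₂ + 1) • ∑ k₂ ∈ range (n₂ + 1), n₂.choose k₂ • a (n₁ - k₁) (n₂ - k₂) • φ (k₁ + k₂) := by
      simpa using sum_range_choose_mul_nsmul n₂ fun k r => a (n₁ - k₁) r • φ (k₁ + k - 1)
    simp_rw [hinner, smul_comm _ (n₂ + 1), ← smul_sum]
    simp [appellExpansion, φ, nsmul_eq_mul]
  rw [hsplit, h₁, h₂]

end appellExpansion

theorem multipleDeltaAppell_iff_addition_general (ω : ℝ) (hω : ω ≠ 0)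
    (P : ℕ → ℕ → Polynomial ℝ) :
    IsMultipleDeltaAppell ω P ↔
      ∀ (n₁ n₂ : ℕ) (x y : ℝ),
        (P n₁ n₂).eval (x + y) =
          ∑ k₁ ∈ Finset.range (n₁ + 1), ∑ k₂ ∈ Finset.range (n₂ + 1),
            (n₁.choose k₁ : ℝ) * (n₂.choose k₂ : ℝ) * (P (n₁ - k₁) (n₂ - k₂)).eval x *
              genFallingFactorial ω y (k₁ + k₂) := by
  constructor
  · intro hP n₁ n₂ x y
    have hpoly := (hP.comp_C_add x).eq_of_eval_zero_eq hω
      (isMultipleDeltaAppell_appellExpansion hω fun i j => (P i j).eval x)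
      (by simp [eval_zero_appellExpansion]) n₁ n₂
    simpa [eval_comp, eval_appellExpansion] using congr_arg (eval y) hpoly
  · intro hadd n₁ n₂
    refine Polynomial.funext fun x => ?_
    have hstep := hadd n₁ n₂ x ω
    simp only [mul_assoc _ (eval x _)] at hstep
    rw [sum_range_choose_mul_sum_range_choose_mul_eq_of_two_le n₁ n₂ _ fun k₁ k₂ hk => by
      rw [genFallingFactorial_self_eq_zero hk, mul_zero]] at hstep
    have hshift : (P n₁ n₂).eval (x + ω) = (P n₁ n₂).eval x +
        ω * (n₁ * (P (n₁ - 1) n₂).eval x + n₂ * (P n₁ (n₂ - 1)).eval x) := by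
      rw [hstep]
      simp only [tsub_zero, add_zero, zero_add, genFallingFactorial, range_zero, prod_empty,
        range_one, prod_singleton, CharP.cast_eq_zero, zero_mul, mul_one]
      ring
    simp [eval_deltaOmega, hshift, hω]

/-- A polynomial set is multiple `Δ_ω`-Appell iff it satisfies the addition formula. -/
theorem multipleDeltaAppell_iff_addition (ω : ℝ) (hω : ω ≠ 0)
    (P : ℕ → ℕ → Polynomial ℝ) (hdeg : ∀ n₁ n₂ : ℕ, (P n₁ n₂).natDegree = n₁ + n₂) :
    IsMultipleDeltaAppell ω P ↔
      ∀ (n₁ n₂ : ℕ) (x y : ℝ),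
        (P n₁ n₂).eval (x + y) =
          ∑ k₁ ∈ Finset.range (n₁ + 1), ∑ k₂ ∈ Finset.range (n₂ + 1),
            (n₁.choose k₁ : ℝ) * (n₂.choose k₂ : ℝ) * (P (n₁ - k₁) (n₂ - k₂)).eval x *
              genFallingFactorial ω y (k₁ + k₂) :=
  multipleDeltaAppell_iff_addition_general ω hω P
end
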